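/- Let T₁ and T₂ be two centered H-valued random variables on a common probability space with E‖Tᵢ‖²_H < ∞ for i = 1, 2, and let R_{ij} = E[Tᵢ ⊗ Tⱼ] (Bochner integrals) for i, j ∈ {1, 2}. If the cross-covariance operator R₁₂ is self-adjoint, then R₁₂ = R₂₁ and ‖R₁₂‖₁ ≤ ‖R₁₁‖₁^{1/2} · ‖R₂₂‖₁^{1/2}. -/

import Mathlib

open MeasureTheory InnerProductSpace Filter
open scoped ENNReal NNReal RealInnerProductSpace BigOperators Topology

noncomputable section

namespace RF

/-- Euclidean three-space. -/
abbrev E3 : Type := EuclideanSpace ℝ (Fin 3)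

/-- The unit two-sphere in `ℝ³`. -/
abbrev S2 : Type := Metric.sphere (0 : E3) 1

/-- A linear isometry of `ℝ³` is a rotation (element of `SO(3)`) if it has determinant one. -/
def IsRotation (ρ : E3 ≃ₗᵢ[ℝ] E3) : Prop :=
  LinearMap.det (ρ.toLinearEquiv : E3 →ₗ[ℝ] E3) = 1

/-- The action of a linear isometry of `ℝ³` on the unit sphere. -/
def rotate (ρ : E3 ≃ₗᵢ[ℝ] E3) (x : S2) : S2 :=
  ⟨ρ x, by
    have hx : ‖(x : E3)‖ = 1 := mem_sphere_zero_iff_norm.mp x.2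
    rw [mem_sphere_zero_iff_norm, ρ.norm_map]
    exact hx⟩

variable {H : Type*} [NormedAddCommGroup H] [InnerProductSpace ℝ H]

/-- The rank-one operator `u ⊗ v : f ↦ ⟪f, v⟫ • u`. -/
def rankOne (u v : H) : H →L[ℝ] H := (innerSL ℝ v).smulRight u

/-- The trace (nuclear) norm of an operator, as an extended nonnegative real:
`‖A‖₁ = sup { ∑ⱼ |⟪A eⱼ, fⱼ⟫| }`, the supremum being over all pairs of finite orthonormal
families.  It is finite precisely on trace-class operators, where it coincides with the
usual nuclear norm. -/
def traceNorm (A : H →L[ℝ] H) : ℝ≥0∞ :=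
  ⨆ (n : ℕ) (e : Fin n → H) (f : Fin n → H) (_ : Orthonormal ℝ e) (_ : Orthonormal ℝ f),
    ∑ j, (‖⟪A (e j), f j⟫_ℝ‖₊ : ℝ≥0∞)

/-- The trace (nuclear) norm, as a real number (junk value `0` for non-nuclear operators). -/
def traceNormR (A : H →L[ℝ] H) : ℝ := (traceNorm A).toReal

/-- An operator is nuclear (trace class) if its trace norm is finite. -/
def IsNuclear (A : H →L[ℝ] H) : Prop := traceNorm A < ⊤

/-- A fixed choice of index set for a Hilbert basis of `H`. -/
def bIdx (H : Type*) [NormedAddCommGroup H] [InnerProductSpace ℝ H] [CompleteSpace H] :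
    Set H :=
  (exists_hilbertBasis ℝ H).choose

/-- A fixed choice of Hilbert basis (complete orthonormal system) of `H`. -/
def bStd (H : Type*) [NormedAddCommGroup H] [InnerProductSpace ℝ H] [CompleteSpace H] :
    HilbertBasis (bIdx H) ℝ H :=
  (exists_hilbertBasis ℝ H).choose_spec.choose

variable [CompleteSpace H]

/-- The trace of an operator, `Tr A = ∑ᵢ ⟪A eᵢ, eᵢ⟫` over a complete orthonormal system
(basis-independent for nuclear operators). -/
def opTrace (A : H →L[ℝ] H) : ℝ := ∑' i : bIdx H, ⟪A (bStd H i), bStd H i⟫_ℝ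

/-- The squared Hilbert–Schmidt norm `‖A‖₂² = ∑ᵢ ‖A eᵢ‖²` (junk value `0` if not summable). -/
def hsNormSq (A : H →L[ℝ] H) : ℝ := ∑' i : bIdx H, ‖A (bStd H i)‖ ^ 2

/-- The fourth power of the `4`-Schatten norm: `‖A‖₄⁴ = ‖A⋆A‖₂²`. -/
def schatten4Pow4 (A : H →L[ℝ] H) : ℝ :=
  hsNormSq ((ContinuousLinearMap.adjoint A).comp A)

/-- An `H`-valued random variable is centered Gaussian if all its real pairings are centered
Gaussian random variables. -/
def IsCenteredGaussian {Ω : Type*} [MeasurableSpace Ω] (P : Measure Ω) (a : Ω → H) : Prop :=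
  ∀ w : H, ∃ v : ℝ≥0,
    Measure.map (fun ω => ⟪a ω, w⟫_ℝ) P = ProbabilityTheory.gaussianReal 0 v

/-- The autocovariance operator `𝓡_{x,y} = E[T(x) ⊗ T(y)]` of a spherical random field. -/
def cov {Ω : Type*} [MeasurableSpace Ω] (P : Measure Ω) (T : S2 → Ω → H) (x y : S2) :
    H →L[ℝ] H :=
  ∫ ω, rankOne (T x ω) (T y ω) ∂P

/-- An isotropic `H`-valued spherical random field: a jointly measurable collection of
centered, square-integrable `H`-valued random variables indexed by the sphere, whose
autocovariance operators are invariant under rotations. -/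
structure IsIsotropicField {Ω : Type*} [MeasurableSpace Ω] (P : Measure Ω)
    (T : S2 → Ω → H) : Prop where
  jointMeas : StronglyMeasurable (Function.uncurry T)
  centered : ∀ x, ∫ ω, T x ω ∂P = 0
  sqInt : ∀ x, MemLp (T x) 2 P
  isotropic : ∀ ρ : E3 ≃ₗᵢ[ℝ] E3, IsRotation ρ → ∀ x y : S2,
    cov P T (rotate ρ x) (rotate ρ y) = cov P T x y

/-- A measure on the sphere is the surface (Lebesgue) measure if it is rotation invariant
with total mass `4π`. -/
structure IsSphereMeasure (μ : Measure S2) : Prop where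
  mass : μ Set.univ = ENNReal.ofReal (4 * Real.pi)
  invariant : ∀ ρ : E3 ≃ₗᵢ[ℝ] E3, IsRotation ρ → Measure.map (rotate ρ) μ = μ

/-- The `ℓ`-th Legendre polynomial (Rodrigues' formula). -/
def legendreP (ℓ : ℕ) : Polynomial ℝ :=
  ((2 ^ ℓ * ℓ.factorial : ℝ)⁻¹) •
    ((⇑(Polynomial.derivative (R := ℝ)))^[ℓ] ((Polynomial.X ^ 2 - 1) ^ ℓ))

/-- The value of the `ℓ`-th Legendre polynomial. -/
def legval (ℓ : ℕ) (t : ℝ) : ℝ := (legendreP ℓ).eval t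

/-- The north pole `e₃ = (0,0,1)` of the sphere. -/
def northPole : E3 := EuclideanSpace.single 2 1

/-- The central spherical harmonic `Y_{ℓ,0}(x) = √((2ℓ+1)/(4π)) P_ℓ(⟪x, e₃⟫)`. -/
def Y0 (ℓ : ℕ) (x : S2) : ℝ :=
  Real.sqrt ((2 * ℓ + 1) / (4 * Real.pi)) * legval ℓ ⟪(x : E3), northPole⟫_ℝ

/-- The power spectrum operator
`𝓕_ℓ = ∫_{S²×S²} 𝓡_{⟨x,y⟩} Y_{ℓ,0}(x) Y_{ℓ,0}(y) dx dy`. -/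
def psOp {Ω : Type*} [MeasurableSpace Ω] (P : Measure Ω) (T : S2 → Ω → H)
    (μ : Measure S2) (ℓ : ℕ) : H →L[ℝ] H :=
  ∫ p : S2 × S2, (Y0 ℓ p.1 * Y0 ℓ p.2) • cov P T p.1 p.2 ∂(μ.prod μ)

end RF


/-! Testing the trace norm against finite orthonormal families `e`, `f`, Bessel's inequality
gives `∑ⱼ |⟪u, eⱼ⟫ ⟪v, fⱼ⟫| ≤ ‖u‖ ‖v‖` pointwise, hence `‖E[S ⊗ U]‖₁ ≤ ‖S‖_{L²} ‖U‖_{L²}` by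
Hölder. Conversely, over a Hilbert basis (countable, as `H` is separable) Parseval and monotone
convergence give `E‖S‖² = ∑ᵢ ⟪E[S ⊗ S] bᵢ, bᵢ⟫ ≤ ‖E[S ⊗ S]‖₁`. The identity `R₁₂ = R₂₁` is just
`(E[T₁ ⊗ T₂])⋆ = E[T₂ ⊗ T₁]`. -/

namespace RF

section Operators

variable {H : Type*} [NormedAddCommGroup H] [InnerProductSpace ℝ H]

@[simp] lemma rankOne_apply (u v x : H) : rankOne u v x = ⟪v, x⟫_ℝ • u := rfl

lemma continuous_uncurry_rankOne : Continuous (Function.uncurry (rankOne : H → H → H →L[ℝ] H)) :=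
  (ContinuousLinearMap.smulRightL ℝ H H).continuous₂.comp
    (((innerSL ℝ).continuous.comp continuous_snd).prodMk continuous_fst)

lemma norm_rankOne_le (u v : H) : ‖rankOne u v‖ ≤ ‖u‖ * ‖v‖ := by
  rw [rankOne, ContinuousLinearMap.norm_smulRight_apply, innerSL_apply_norm, mul_comm]

lemma _root_.Orthonormal.countable [TopologicalSpace.SeparableSpace H] {ι : Type*} {v : ι → H}
    (hv : Orthonormal ℝ v) : Countable ι := by
  refine Pairwise.countable_of_isOpen_disjoint (s := fun i => Metric.ball (v i) (1 / 2))
    (fun i j hij => Metric.ball_disjoint_ball ?_) (fun _ => Metric.isOpen_ball)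
    (fun _ => Metric.nonempty_ball.2 (by norm_num))
  have h_sq : ‖v i - v j‖ ^ 2 = 2 := by
    rw [norm_sub_sq_real, hv.2 hij, hv.1 i, hv.1 j]
    norm_num
  rw [dist_eq_norm]
  nlinarith [norm_nonneg (v i - v j)]

lemma sum_abs_inner_mul_inner_le {ι : Type*} (s : Finset ι) {e f : ι → H}
    (he : Orthonormal ℝ e) (hf : Orthonormal ℝ f) (u v : H) :
    ∑ j ∈ s, |⟪u, e j⟫_ℝ * ⟪v, f j⟫_ℝ| ≤ ‖u‖ * ‖v‖ := by
  have bessel : ∀ {b : ι → H}, Orthonormal ℝ b → ∀ x : H, ∑ j ∈ s, |⟪x, b j⟫_ℝ| ^ 2 ≤ ‖x‖ ^ 2 :=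
    fun hb x => by
      simpa only [Real.norm_eq_abs, real_inner_comm x] using hb.sum_inner_products_le x
  calc ∑ j ∈ s, |⟪u, e j⟫_ℝ * ⟪v, f j⟫_ℝ| = ∑ j ∈ s, |⟪u, e j⟫_ℝ| * |⟪v, f j⟫_ℝ| := by
        simp only [abs_mul]
    _ ≤ √(∑ j ∈ s, |⟪u, e j⟫_ℝ| ^ 2) * √(∑ j ∈ s, |⟪v, f j⟫_ℝ| ^ 2) :=
        Real.sum_mul_le_sqrt_mul_sqrt _ _ _
    _ ≤ √(‖u‖ ^ 2) * √(‖v‖ ^ 2) := by gcongr <;> exact bessel ‹_› _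
    _ = ‖u‖ * ‖v‖ := by rw [Real.sqrt_sq (norm_nonneg _), Real.sqrt_sq (norm_nonneg _)]

lemma sum_enorm_inner_le_traceNorm (A : H →L[ℝ] H) {n : ℕ} {e f : Fin n → H}
    (he : Orthonormal ℝ e) (hf : Orthonormal ℝ f) :
    ∑ j, ‖⟪A (e j), f j⟫_ℝ‖ₑ ≤ traceNorm A :=
  le_iSup_of_le n <| le_iSup_of_le e <| le_iSup_of_le f <|
    le_iSup_of_le he <| le_iSup_of_le hf le_rfl

lemma traceNorm_le {A : H →L[ℝ] H} {c : ℝ≥0∞}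
    (h : ∀ (n : ℕ) (e f : Fin n → H), Orthonormal ℝ e → Orthonormal ℝ f →
      ∑ j, ‖⟪A (e j), f j⟫_ℝ‖ₑ ≤ c) :
    traceNorm A ≤ c :=
  iSup_le fun n => iSup_le fun e => iSup_le fun f => iSup_le fun he => iSup_le fun hf =>
    h n e f he hf

lemma tsum_enorm_inner_self_le_traceNorm (A : H →L[ℝ] H) {ι : Type*} {v : ι → H}
    (hv : Orthonormal ℝ v) :
    ∑' i, ‖⟪A (v i), v i⟫_ℝ‖ₑ ≤ traceNorm A := by
  rw [ENNReal.tsum_eq_iSup_sum]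
  refine iSup_le fun s => ?_
  let w : Fin s.card → H := fun j => v (s.equivFin.symm j)
  have hw : Orthonormal ℝ w := hv.comp _ (Subtype.val_injective.comp s.equivFin.symm.injective)
  calc ∑ i ∈ s, ‖⟪A (v i), v i⟫_ℝ‖ₑ = ∑ j, ‖⟪A (w j), w j⟫_ℝ‖ₑ := by
        rw [← Finset.sum_coe_sort s, ← Equiv.sum_comp s.equivFin.symm]
    _ ≤ traceNorm A := sum_enorm_inner_le_traceNorm A hw hw

lemma _root_.HilbertBasis.ofReal_norm_sq_eq_tsum {ι : Type*} (b : HilbertBasis ι ℝ H) (x : H) :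
    ENNReal.ofReal (‖x‖ ^ 2) = ∑' i, ENNReal.ofReal (⟪x, b i⟫_ℝ ^ 2) := by
  have h_parseval := b.hasSum_inner_mul_inner x x
  simp only [real_inner_self_eq_norm_sq, real_inner_comm x, ← sq] at h_parseval
  rw [← h_parseval.tsum_eq, ENNReal.ofReal_tsum_of_nonneg (fun _ => sq_nonneg _)
    h_parseval.summable]

end Operators

section Covariance

variable {H : Type*} [NormedAddCommGroup H] [InnerProductSpace ℝ H]
  {Ω : Type*} [MeasurableSpace Ω] {P : Measure Ω} {S U : Ω → H}

lemma integrable_rankOne (hS : MemLp S 2 P) (hU : MemLp U 2 P) :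
    Integrable (fun ω => rankOne (S ω) (U ω)) P :=
  (hS.norm.integrable_mul hU.norm).mono'
    (continuous_uncurry_rankOne.comp_aestronglyMeasurable₂ hS.1 hU.1)
    (ae_of_all _ fun _ => norm_rankOne_le _ _)

variable [CompleteSpace H]

lemma inner_integral_rankOne_apply (hS : MemLp S 2 P) (hU : MemLp U 2 P) (x y : H) :
    ⟪(∫ ω, rankOne (S ω) (U ω) ∂P) x, y⟫_ℝ = ∫ ω, ⟪U ω, x⟫_ℝ * ⟪S ω, y⟫_ℝ ∂P := by
  have hI := integrable_rankOne hS hU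
  rw [ContinuousLinearMap.integral_apply hI, real_inner_comm,
    ← integral_inner (hI.apply_continuousLinearMap x)]
  simp only [rankOne_apply, real_inner_smul_right, real_inner_comm y]

lemma adjoint_integral_rankOne (hS : MemLp S 2 P) (hU : MemLp U 2 P) :
    ContinuousLinearMap.adjoint (∫ ω, rankOne (S ω) (U ω) ∂P) = ∫ ω, rankOne (U ω) (S ω) ∂P := by
  refine ((ContinuousLinearMap.eq_adjoint_iff _ _).2 fun x y => ?_).symm
  rw [inner_integral_rankOne_apply hU hS, ← real_inner_comm x,
    inner_integral_rankOne_apply hS hU]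
  simp only [mul_comm]

lemma traceNorm_integral_rankOne_le (hS : MemLp S 2 P) (hU : MemLp U 2 P) :
    traceNorm (∫ ω, rankOne (S ω) (U ω) ∂P) ≤ eLpNorm S 2 P * eLpNorm U 2 P := by
  refine traceNorm_le fun n e f he hf => ?_
  have h_meas : ∀ j, AEMeasurable (fun ω => ‖⟪U ω, e j⟫_ℝ * ⟪S ω, f j⟫_ℝ‖ₑ) P := fun j =>
    ((hU.inner_const (e j)).1.mul (hS.inner_const (f j)).1).enorm
  have h_pointwise : ∀ ω, ∑ j, ‖⟪U ω, e j⟫_ℝ * ⟪S ω, f j⟫_ℝ‖ₑ ≤ ‖‖S ω‖ * ‖U ω‖‖ₑ := fun ω => by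
    simp only [Real.enorm_eq_ofReal_abs]
    rw [← ENNReal.ofReal_sum_of_nonneg fun _ _ => abs_nonneg _]
    refine ENNReal.ofReal_le_ofReal ((sum_abs_inner_mul_inner_le _ he hf _ _).trans ?_)
    rw [mul_comm]
    exact le_abs_self _
  have h_holder := eLpNorm_le_eLpNorm_mul_eLpNorm'_of_norm (p := 2) (q := 2) (r := 1) hS.1 hU.1
    (fun u v : H => ‖u‖ * ‖v‖) 1 (ae_of_all _ fun _ => by simp)
  rw [eLpNorm_one_eq_lintegral_enorm, ENNReal.coe_one, one_mul] at h_holder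
  calc ∑ j, ‖⟪(∫ ω, rankOne (S ω) (U ω) ∂P) (e j), f j⟫_ℝ‖ₑ
      = ∑ j, ‖∫ ω, ⟪U ω, e j⟫_ℝ * ⟪S ω, f j⟫_ℝ ∂P‖ₑ := by
        simp only [inner_integral_rankOne_apply hS hU]
    _ ≤ ∑ j, ∫⁻ ω, ‖⟪U ω, e j⟫_ℝ * ⟪S ω, f j⟫_ℝ‖ₑ ∂P :=
        Finset.sum_le_sum fun j _ => enorm_integral_le_lintegral_enorm _
    _ = ∫⁻ ω, ∑ j, ‖⟪U ω, e j⟫_ℝ * ⟪S ω, f j⟫_ℝ‖ₑ ∂P :=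
        (lintegral_finsetSum' _ fun j _ => h_meas j).symm
    _ ≤ ∫⁻ ω, ‖‖S ω‖ * ‖U ω‖‖ₑ ∂P := lintegral_mono h_pointwise
    _ ≤ eLpNorm S 2 P * eLpNorm U 2 P := h_holder

lemma lintegral_norm_sq_le_traceNorm [TopologicalSpace.SeparableSpace H] (hS : MemLp S 2 P) :
    ∫⁻ ω, ENNReal.ofReal (‖S ω‖ ^ 2) ∂P ≤ traceNorm (∫ ω, rankOne (S ω) (S ω) ∂P) := by
  let b := bStd H
  have := b.orthonormal.countable
  have h_diag : ∀ i, ∫⁻ ω, ENNReal.ofReal (⟪S ω, b i⟫_ℝ ^ 2) ∂P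
      ≤ ‖⟪(∫ ω, rankOne (S ω) (S ω) ∂P) (b i), b i⟫_ℝ‖ₑ := fun i => by
    rw [← ofReal_integral_eq_lintegral_ofReal (hS.inner_const (b i)).integrable_sq
      (ae_of_all _ fun _ => sq_nonneg _), inner_integral_rankOne_apply hS hS,
      Real.enorm_eq_ofReal_abs]
    simp_rw [← sq]
    exact ENNReal.ofReal_le_ofReal (le_abs_self _)
  calc ∫⁻ ω, ENNReal.ofReal (‖S ω‖ ^ 2) ∂P
      = ∫⁻ ω, ∑' i, ENNReal.ofReal (⟪S ω, b i⟫_ℝ ^ 2) ∂P := by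
        simp only [b.ofReal_norm_sq_eq_tsum]
    _ = ∑' i, ∫⁻ ω, ENNReal.ofReal (⟪S ω, b i⟫_ℝ ^ 2) ∂P :=
        lintegral_tsum fun i => ((hS.inner_const (b i)).1.aemeasurable.pow_const 2).ennreal_ofReal
    _ ≤ ∑' i, ‖⟪(∫ ω, rankOne (S ω) (S ω) ∂P) (b i), b i⟫_ℝ‖ₑ := ENNReal.tsum_le_tsum h_diag
    _ ≤ _ := tsum_enorm_inner_self_le_traceNorm _ b.orthonormal

lemma eLpNorm_two_le_traceNorm_rpow [TopologicalSpace.SeparableSpace H] (hS : MemLp S 2 P) :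
    eLpNorm S 2 P ≤ traceNorm (∫ ω, rankOne (S ω) (S ω) ∂P) ^ (1 / 2 : ℝ) := by
  rw [eLpNorm_eq_lintegral_rpow_enorm_toReal two_ne_zero ENNReal.ofNat_ne_top]
  refine ENNReal.rpow_le_rpow (le_of_eq_of_le ?_ (lintegral_norm_sq_le_traceNorm hS)) (by norm_num)
  simp only [ENNReal.toReal_ofNat, ENNReal.rpow_ofNat, norm_nonneg, ENNReal.ofReal_pow,
    ofReal_norm]

end Covariance

theorem crossCov_selfAdjoint_general
    {H : Type*} [NormedAddCommGroup H] [InnerProductSpace ℝ H] [CompleteSpace H]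
    [TopologicalSpace.SeparableSpace H]
    {Ω : Type*} [MeasurableSpace Ω] (P : Measure Ω)
    (T₁ T₂ : Ω → H)
    (h₁ : MemLp T₁ 2 P) (h₂ : MemLp T₂ 2 P)
    (hsa : ContinuousLinearMap.adjoint (∫ ω, rankOne (T₁ ω) (T₂ ω) ∂P)
      = ∫ ω, rankOne (T₁ ω) (T₂ ω) ∂P) :
    (∫ ω, rankOne (T₁ ω) (T₂ ω) ∂P) = (∫ ω, rankOne (T₂ ω) (T₁ ω) ∂P) ∧
      traceNorm (∫ ω, rankOne (T₁ ω) (T₂ ω) ∂P)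
        ≤ traceNorm (∫ ω, rankOne (T₁ ω) (T₁ ω) ∂P) ^ (1 / 2 : ℝ) *
            traceNorm (∫ ω, rankOne (T₂ ω) (T₂ ω) ∂P) ^ (1 / 2 : ℝ) :=
  ⟨hsa.symm.trans (adjoint_integral_rankOne h₁ h₂),
    (traceNorm_integral_rankOne_le h₁ h₂).trans
      (mul_le_mul' (eLpNorm_two_le_traceNorm_rpow h₁) (eLpNorm_two_le_traceNorm_rpow h₂))⟩

/-- Lemma on cross-covariance operators. If the cross-covariance operator
`𝓡₁₂ = E[T₁ ⊗ T₂]` of two centered square-integrable `H`-valued random variables is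
self-adjoint, then `𝓡₁₂ = 𝓡₂₁` and `‖𝓡₁₂‖₁ ≤ ‖𝓡₁₁‖₁^{1/2} ‖𝓡₂₂‖₁^{1/2}`. -/
theorem crossCov_selfAdjoint
    {H : Type*} [NormedAddCommGroup H] [InnerProductSpace ℝ H] [CompleteSpace H]
    [TopologicalSpace.SeparableSpace H]
    {Ω : Type*} [MeasurableSpace Ω] (P : Measure Ω) [IsProbabilityMeasure P]
    (T₁ T₂ : Ω → H)
    (h₁ : MemLp T₁ 2 P) (h₂ : MemLp T₂ 2 P)
    (hc₁ : ∫ ω, T₁ ω ∂P = 0) (hc₂ : ∫ ω, T₂ ω ∂P = 0)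
    (hsa : ContinuousLinearMap.adjoint (∫ ω, rankOne (T₁ ω) (T₂ ω) ∂P)
      = ∫ ω, rankOne (T₁ ω) (T₂ ω) ∂P) :
    (∫ ω, rankOne (T₁ ω) (T₂ ω) ∂P) = (∫ ω, rankOne (T₂ ω) (T₁ ω) ∂P) ∧
      traceNorm (∫ ω, rankOne (T₁ ω) (T₂ ω) ∂P)
        ≤ traceNorm (∫ ω, rankOne (T₁ ω) (T₁ ω) ∂P) ^ (1 / 2 : ℝ) *
            traceNorm (∫ ω, rankOne (T₂ ω) (T₂ ω) ∂P) ^ (1 / 2 : ℝ) :=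
  crossCov_selfAdjoint_general P T₁ T₂ h₁ h₂ hsa

end RF
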